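/- Let G = (V,D,B) be an acyclic mixed graph with Λ ∈ ℝ^{D} (strictly upper triangular in topological order) and Ω symmetric supported on B plus diagonal. For every pair i, j ∈ V, the (i,j) entry of Σ = (I−Λ)^{-T} Ω (I−Λ)^{-1} equals the sum over all treks τ from i to j of the trek monomial σ(τ) = ω_{top} · Π (edge coefficients along the left side) · Π (edge coefficients along the right side). (Trek rule.) -/

import Mathlib

open scoped Matrix

/-- A finite set `S` of vertices is (the vertex set of) a directed path from `a` to `b`
    in a DAG whose edges go strictly upward (so a path is determined by its vertex
    set). -/
def IsPathSet {n : ℕ} (E : Fin n → Fin n → Prop) (S : Finset (Fin n))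
    (a b : Fin n) : Prop :=
  (S.sort (· ≤ ·)).Chain' E ∧ (S.sort (· ≤ ·)).head? = some a ∧
    (S.sort (· ≤ ·)).getLast? = some b

instance {n : ℕ} (E : Fin n → Fin n → Prop) [DecidableRel E]
    (S : Finset (Fin n)) (a b : Fin n) : Decidable (IsPathSet E S a b) := by
  unfold IsPathSet List.Chain'; infer_instance

/-- The path monomial: product of the edge weights along the path with vertex
    set `S`. -/
def pathWeight {n : ℕ} (Λ : Matrix (Fin n) (Fin n) ℝ) (S : Finset (Fin n)) : ℝ :=
  (((S.sort (· ≤ ·)).zip (S.sort (· ≤ ·)).tail).map fun e => Λ e.1 e.2).prod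

/-! Since edges go upward, splitting off the first edge of a path shows that the matrix `P` of
path sums satisfies `P = 1 + Λ P`, i.e. `P = (1 - Λ)⁻¹`; expanding `(Pᵀ Ω P) i j` entrywise then
gives the sum over pairs of paths from the top vertices `a`, `b` to `i`, `j`. -/

open Finset

theorem Finset.sort_insert_of_forall_lt {α : Type*} [LinearOrder α] [DecidableEq α]
    {s : Finset α} {a : α} (h : ∀ x ∈ s, a < x) :
    (insert a s).sort (· ≤ ·) = a :: s.sort (· ≤ ·) :=
  sort_insert _ (fun x hx => (h x hx).le) (fun ha => lt_irrefl a (h a ha))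

theorem Matrix.transpose_mul_mul_apply {ι R : Type*} [Fintype ι] [CommSemiring R]
    (A B C : Matrix ι ι R) (i j : ι) :
    (Aᵀ * B * C) i j = ∑ a, ∑ b, A a i * B a b * C b j := by
  simp only [Matrix.mul_apply, Matrix.transpose_apply, Finset.sum_mul]
  exact Finset.sum_comm

section PathSets

variable {n : ℕ} {E : Fin n → Fin n → Prop} {S T : Finset (Fin n)} {a b i : Fin n}

theorem isPathSet_iff :
    IsPathSet E S a i ↔ (S.sort (· ≤ ·)).IsChain E ∧ (S.sort (· ≤ ·)).head? = some a ∧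
      (S.sort (· ≤ ·)).getLast? = some i :=
  Iff.rfl

theorem isPathSet_singleton_iff : IsPathSet E {a} a i ↔ a = i := by
  simp [isPathSet_iff, sort_singleton]

theorem pathWeight_singleton (Λ : Matrix (Fin n) (Fin n) ℝ) : pathWeight Λ {a} = 1 := by
  simp [pathWeight, sort_singleton]

theorem isPathSet_insert_iff {L : List (Fin n)} (ha : ∀ x ∈ T, a < x)
    (hT : T.sort (· ≤ ·) = b :: L) :
    IsPathSet E (insert a T) a i ↔ E a b ∧ IsPathSet E T b i := by
  simp [isPathSet_iff, sort_insert_of_forall_lt ha, hT, and_assoc]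

theorem pathWeight_insert (Λ : Matrix (Fin n) (Fin n) ℝ) {L : List (Fin n)}
    (ha : ∀ x ∈ T, a < x) (hT : T.sort (· ≤ ·) = b :: L) :
    pathWeight Λ (insert a T) = Λ a b * pathWeight Λ T := by
  simp [pathWeight, sort_insert_of_forall_lt ha, hT]

namespace IsPathSet

theorem sort_eq_cons (h : IsPathSet E S a i) :
    S.sort (· ≤ ·) = a :: (S.sort (· ≤ ·)).tail := by
  obtain ⟨-, hh, -⟩ := h
  cases hs : S.sort (· ≤ ·) <;> simp_all

theorem start_mem (h : IsPathSet E S a i) : a ∈ S :=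
  mem_sort (· ≤ ·) |>.1 (h.sort_eq_cons ▸ List.mem_cons_self)

theorem start_le (h : IsPathSet E S a i) {x : Fin n} (hx : x ∈ S) : a ≤ x := by
  have hs := S.pairwise_sort (· ≤ ·)
  rw [h.sort_eq_cons] at hs
  rw [← mem_sort (· ≤ ·), h.sort_eq_cons] at hx
  rcases List.mem_cons.1 hx with rfl | hx
  · exact le_rfl
  · exact List.rel_of_pairwise_cons hs hx

theorem start_unique {b' j : Fin n} (h : IsPathSet E S b i) (h' : IsPathSet E S b' j) :
    b = b' :=
  Option.some_injective _ (h.2.1.symm.trans h'.2.1)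

theorem lt_of_lt_start (hT : IsPathSet E T b i) (hab : a < b) : ∀ x ∈ T, a < x :=
  fun _ hx => hab.trans_le (hT.start_le hx)

theorem insert (hT : IsPathSet E T b i) (hE : E a b) (hab : a < b) :
    IsPathSet E (insert a T) a i :=
  (isPathSet_insert_iff (hT.lt_of_lt_start hab) hT.sort_eq_cons).2 ⟨hE, hT⟩

theorem exists_erase (hS : IsPathSet E S a i) (hne : S ≠ {a}) :
    ∃ b, E a b ∧ IsPathSet E (S.erase a) b i := by
  have ha : ∀ x ∈ S.erase a, a < x := fun x hx =>
    (hS.start_le (mem_of_mem_erase hx)).lt_of_ne (ne_of_mem_erase hx).symm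
  obtain ⟨b, L, hL⟩ : ∃ b L, (S.erase a).sort (· ≤ ·) = b :: L := by
    cases h : (S.erase a).sort (· ≤ ·) with
    | nil =>
      have h' := (S.erase a).sort_toFinset (· ≤ ·)
      rw [h, List.toFinset_nil, eq_comm, erase_eq_empty_iff] at h'
      exact absurd h' (by simp [hne, ne_empty_of_mem hS.start_mem])
    | cons b L => exact ⟨b, L, rfl⟩
  rw [← insert_erase hS.start_mem] at hS
  exact ⟨b, (isPathSet_insert_iff ha hL).1 hS⟩

end IsPathSet

end PathSets

section PathSums

variable {n : ℕ} (E : Fin n → Fin n → Prop) [DecidableRel E] (Λ : Matrix (Fin n) (Fin n) ℝ)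

noncomputable def pathSum : Matrix (Fin n) (Fin n) ℝ := fun a i =>
  ∑ S : Finset (Fin n), if IsPathSet E S a i then pathWeight Λ S else 0

variable {E}

-- The bijection is `(b, T) ↦ insert a T`, inverted by erasing `a`, the minimum of the path set.
theorem sum_pathWeight_of_ne_singleton (hE : ∀ a b, E a b → a < b) (a i : Fin n) :
    ∑ S with IsPathSet E S a i ∧ S ≠ {a}, pathWeight Λ S =
      ∑ p : Fin n × Finset (Fin n) with E a p.1 ∧ IsPathSet E p.2 p.1 i,
        Λ a p.1 * pathWeight Λ p.2 := by
  symm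
  apply sum_nbij (fun p => insert a p.2)
  · rintro ⟨b, T⟩ hbT
    obtain ⟨hab, hT⟩ := (mem_filter.1 hbT).2
    refine mem_filter.2 ⟨mem_univ _, hT.insert hab (hE a b hab), fun h => ?_⟩
    have hb : b ∈ ({a} : Finset (Fin n)) := h ▸ mem_insert_of_mem hT.start_mem
    exact (hE a b hab).ne' (mem_singleton.1 hb)
  · rintro ⟨b, T⟩ hbT ⟨b', T'⟩ hbT' h
    obtain ⟨hab, hT⟩ := (mem_filter.1 hbT).2
    obtain ⟨hab', hT'⟩ := (mem_filter.1 hbT').2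
    have haT : a ∉ T := fun ha => lt_irrefl a (hT.lt_of_lt_start (hE a b hab) a ha)
    have haT' : a ∉ T' := fun ha => lt_irrefl a (hT'.lt_of_lt_start (hE a b' hab') a ha)
    have hTT' : T = T' := by
      rw [← erase_insert haT, ← erase_insert haT']
      exact congrArg (erase · a) h
    subst hTT'
    exact Prod.ext (hT.start_unique hT') rfl
  · intro S hS
    obtain ⟨hS, hne⟩ := (mem_filter.1 hS).2
    obtain ⟨b, hab, hb⟩ := hS.exists_erase hne
    exact ⟨(b, S.erase a), mem_filter.2 ⟨mem_univ _, hab, hb⟩, insert_erase hS.start_mem⟩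
  · rintro ⟨b, T⟩ hbT
    obtain ⟨hab, hT⟩ := (mem_filter.1 hbT).2
    exact (pathWeight_insert Λ (hT.lt_of_lt_start (hE a b hab)) hT.sort_eq_cons).symm

theorem pathSum_eq_one_add_mul (hE : ∀ a b, E a b → a < b)
    (hΛ : ∀ a b, ¬E a b → Λ a b = 0) :
    pathSum E Λ = 1 + Λ * pathSum E Λ := by
  ext a i
  have hsplit : pathSum E Λ a i =
      (if a = i then 1 else 0) + ∑ S with IsPathSet E S a i ∧ S ≠ {a}, pathWeight Λ S := by
    calc pathSum E Λ a i
        = ∑ S, ((if S = {a} then if IsPathSet E S a i then pathWeight Λ S else 0 else 0) +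
            if IsPathSet E S a i ∧ S ≠ {a} then pathWeight Λ S else 0) :=
          sum_congr rfl fun S _ => by by_cases hS : S = {a} <;> simp [hS]
      _ = _ := by
          rw [sum_add_distrib, sum_ite_eq', sum_filter]
          simp [isPathSet_singleton_iff, pathWeight_singleton]
  have hmul : (Λ * pathSum E Λ) a i =
      ∑ p : Fin n × Finset (Fin n) with E a p.1 ∧ IsPathSet E p.2 p.1 i,
        Λ a p.1 * pathWeight Λ p.2 := by
    rw [Matrix.mul_apply, sum_filter, Fintype.sum_prod_type]
    refine sum_congr rfl fun b _ => ?_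
    rw [pathSum, mul_sum]
    refine sum_congr rfl fun T _ => ?_
    by_cases hab : E a b <;> simp [hab, hΛ]
  rw [Matrix.add_apply, Matrix.one_apply, hsplit, hmul, sum_pathWeight_of_ne_singleton Λ hE]

theorem inv_one_sub_eq_pathSum (hE : ∀ a b, E a b → a < b)
    (hΛ : ∀ a b, ¬E a b → Λ a b = 0) :
    (1 - Λ)⁻¹ = pathSum E Λ := by
  refine Matrix.inv_eq_right_inv ?_
  rw [sub_mul, one_mul, sub_eq_iff_eq_add]
  exact pathSum_eq_one_add_mul Λ hE hΛ

end PathSums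

theorem trek_rule_general (n : ℕ) (E : Fin n → Fin n → Prop) [DecidableRel E]
    (hE : ∀ a b : Fin n, E a b → a < b)
    (Λ Ω : Matrix (Fin n) (Fin n) ℝ)
    (hΛ : ∀ a b : Fin n, ¬E a b → Λ a b = 0)
    (i j : Fin n) :
    ((((1 - Λ)⁻¹)ᵀ * Ω * (1 - Λ)⁻¹ : Matrix (Fin n) (Fin n) ℝ)) i j =
      ∑ a : Fin n, ∑ b : Fin n, ∑ S : Finset (Fin n), ∑ T : Finset (Fin n),
        if IsPathSet E S a i ∧ IsPathSet E T b j then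
          Ω a b * pathWeight Λ S * pathWeight Λ T
        else 0 := by
  rw [inv_one_sub_eq_pathSum Λ hE hΛ, Matrix.transpose_mul_mul_apply]
  refine sum_congr rfl fun a _ => sum_congr rfl fun b _ => ?_
  rw [pathSum, pathSum, sum_mul, sum_mul_sum]
  refine sum_congr rfl fun S _ => sum_congr rfl fun T _ => ?_
  split_ifs <;> simp_all [mul_comm, mul_left_comm]

/-- Trek rule: the (i,j) entry of Σ = (I−Λ)^{-T} Ω (I−Λ)^{-1} is the sum, over all
    treks from i to j (a trek being a directed path from a top vertex a down to i
    together with a directed path from a top vertex b down to j, weighted by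
    ω_{ab}), of the trek monomials. -/
theorem trek_rule (n : ℕ) (E : Fin n → Fin n → Prop) [DecidableRel E]
    (hE : ∀ a b : Fin n, E a b → a < b)
    (B : Fin n → Fin n → Prop)
    (Λ Ω : Matrix (Fin n) (Fin n) ℝ)
    (hΛ : ∀ a b : Fin n, ¬E a b → Λ a b = 0)
    (hΩ : Ω.IsSymm)
    (hΩB : ∀ a b : Fin n, a ≠ b → ¬B a b → Ω a b = 0)
    (i j : Fin n) :
    ((((1 - Λ)⁻¹)ᵀ * Ω * (1 - Λ)⁻¹ : Matrix (Fin n) (Fin n) ℝ)) i j =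
      ∑ a : Fin n, ∑ b : Fin n, ∑ S : Finset (Fin n), ∑ T : Finset (Fin n),
        if IsPathSet E S a i ∧ IsPathSet E T b j then
          Ω a b * pathWeight Λ S * pathWeight Λ T
        else 0 :=
  trek_rule_general n E hE Λ Ω hΛ i j
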